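/- arXiv:2605.20662 — 3 statements merged into one kernel-verified Lean document; each statement's English description precedes it below -/
import Mathlib

section
/- Let u ∈ ℍⁿ, |u| < 1, s = √(1−|u|²), and let Φ_u be the (n+1)×(n+1) quaternionic block matrix (1/s)·[[−A_u, u],[−u*, 1]] where A_u = (1/(1+s))·u u* + s·I_n. Then Φ_u² = I_{n+1}. -/
noncomputable section

abbrev ℍ := Quaternion ℝ

/-- s = √(1−|u|²) where |u|² = ∑ |uᵢ|². -/
def sOf {n : ℕ} (u : Fin n → ℍ) : ℝ := Real.sqrt (1 - ∑ i, ‖u i‖ ^ 2)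

/-- The Hua matrix A_u = (1/(1+s))·u u* + s·Iₙ. -/
def AuM {n : ℕ} (u : Fin n → ℍ) : Matrix (Fin n) (Fin n) ℍ :=
  ((1 + sOf u)⁻¹ : ℝ) • Matrix.of (fun i j => u i * star (u j)) + (sOf u : ℝ) • (1 : Matrix (Fin n) (Fin n) ℍ)

/-- The block matrix Φ_u = (1/s)·[[−A_u, u],[−u*, 1]] on ℍ^{n+1} = ℍⁿ ⊕ ℍ. -/
def PhiM {n : ℕ} (u : Fin n → ℍ) : Matrix (Fin n ⊕ Unit) (Fin n ⊕ Unit) ℍ :=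
  ((sOf u)⁻¹ : ℝ) • Matrix.fromBlocks (-(AuM u)) (Matrix.of fun i (_ : Unit) => u i)
    (Matrix.of fun (_ : Unit) j => -(star (u j))) (Matrix.of fun (_ : Unit) (_ : Unit) => 1)

/-- J = diag(Iₙ, −1). -/
def Jmat (n : ℕ) : Matrix (Fin n ⊕ Unit) (Fin n ⊕ Unit) ℍ :=
  Matrix.fromBlocks (1 : Matrix (Fin n) (Fin n) ℍ) 0 0 (Matrix.of fun (_ : Unit) (_ : Unit) => (-1 : ℍ))

theorem PhiM_involution {n : ℕ} (u : Fin n → ℍ) (hu : Real.sqrt (∑ i, ‖u i‖ ^ 2) < 1) :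
    PhiM u * PhiM u = 1 := by
  set t : ℝ := ∑ i, ‖u i‖ ^ 2 with ht
  have ht0 : 0 ≤ t := Finset.sum_nonneg fun i _ => by positivity
  have ht1 : t < 1 := by
    nlinarith [Real.sq_sqrt ht0, Real.sqrt_nonneg t]
  set s : ℝ := sOf u with hs
  have hs2 : s ^ 2 = 1 - t := Real.sq_sqrt (by linarith)
  have htt : t = 1 - s ^ 2 := by linarith
  have hspos : 0 < s := Real.sqrt_pos.2 (by linarith)
  have h1s : (1 : ℝ) + s ≠ 0 := by positivity
  have hK : ∑ j, star (u j) * u j = ((t : ℝ) : ℍ) := by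
    have h1 : ((t : ℝ) : ℍ) = algebraMap ℝ ℍ t := rfl
    rw [h1, ht, map_sum]
    refine Finset.sum_congr rfl fun j _ => ?_
    rw [Quaternion.star_mul_self, Quaternion.normSq_eq_norm_mul_self, ← sq]
    rfl
  set P : Matrix (Fin n) (Fin n) ℍ := Matrix.of (fun i j => u i * star (u j)) with hP
  set U : Matrix (Fin n) Unit ℍ := Matrix.of (fun i (_ : Unit) => u i) with hU
  set V : Matrix Unit (Fin n) ℍ := Matrix.of (fun (_ : Unit) j => -(star (u j))) with hV
  have hW : (Matrix.of fun (_ : Unit) (_ : Unit) => (1 : ℍ)) = (1 : Matrix Unit Unit ℍ) := by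
    refine Matrix.ext fun i j => ?_
    simp [Matrix.one_apply]
  have hPP : P * P = t • P := by
    refine Matrix.ext fun i j => ?_
    simp only [Matrix.mul_apply, hP, Matrix.smul_apply, Matrix.of_apply]
    calc ∑ k, u i * star (u k) * (u k * star (u j))
        = u i * (∑ k, star (u k) * u k) * star (u j) := by
          rw [Finset.mul_sum, Finset.sum_mul]
          exact Finset.sum_congr rfl fun k _ => by simp [mul_assoc]
      _ = t • (u i * star (u j)) := by
          rw [hK, Quaternion.mul_coe_eq_smul, smul_mul_assoc]
  have hPU : P * U = t • U := by
    refine Matrix.ext fun i j => ?_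
    simp only [Matrix.mul_apply, hP, hU, Matrix.smul_apply, Matrix.of_apply]
    calc ∑ k, u i * star (u k) * u k
        = u i * (∑ k, star (u k) * u k) := by
          rw [Finset.mul_sum]
          exact Finset.sum_congr rfl fun k _ => by simp [mul_assoc]
      _ = t • u i := by rw [hK, Quaternion.mul_coe_eq_smul]
  have hVP : V * P = t • V := by
    refine Matrix.ext fun i j => ?_
    simp only [Matrix.mul_apply, hP, hV, Matrix.smul_apply, Matrix.of_apply]
    calc ∑ k, -star (u k) * (u k * star (u j))
        = -((∑ k, star (u k) * u k) * star (u j)) := by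
          rw [Finset.sum_mul, ← Finset.sum_neg_distrib]
          exact Finset.sum_congr rfl fun k _ => by simp [mul_assoc]
      _ = t • -star (u j) := by
          rw [hK, Quaternion.coe_mul_eq_smul, smul_neg]
  have hUV : U * V = -P := by
    refine Matrix.ext fun i j => ?_
    simp [Matrix.mul_apply, hU, hV, hP]
  have hVU : V * U = (-t) • (1 : Matrix Unit Unit ℍ) := by
    refine Matrix.ext fun i j => ?_
    simp only [Matrix.mul_apply, hU, hV, Matrix.smul_apply, Matrix.of_apply]
    calc ∑ k, -star (u k) * u k
        = -(∑ k, star (u k) * u k) := by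
          rw [← Finset.sum_neg_distrib]
          exact Finset.sum_congr rfl fun k _ => by simp
      _ = (-t) • (1 : Matrix Unit Unit ℍ) i j := by
          rw [hK, Matrix.one_apply, if_pos (Subsingleton.elim i j)]
          rw [← Quaternion.coe_mul_eq_smul, mul_one]
          push_cast
          ring
  set c : ℝ := (1 + s)⁻¹ with hc
  have hA : AuM u = c • P + s • (1 : Matrix (Fin n) (Fin n) ℍ) := rfl
  have hB11 : -(AuM u) * -(AuM u) + U * V = (s ^ 2) • (1 : Matrix (Fin n) (Fin n) ℍ) := by
    rw [neg_mul_neg, hA, hUV]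
    simp only [Matrix.add_mul, Matrix.mul_add, Matrix.smul_mul, Matrix.mul_smul,
      Matrix.mul_one, Matrix.one_mul, hPP]
    match_scalars
    · rw [htt, hc]
      field_simp
      ring
    · ring
  have hB12 : -(AuM u) * U + U * (Matrix.of fun (_ : Unit) (_ : Unit) => (1 : ℍ)) = 0 := by
    rw [hW, Matrix.mul_one, hA]
    simp only [Matrix.neg_mul, Matrix.add_mul, Matrix.smul_mul, Matrix.one_mul, hPU]
    match_scalars
    rw [htt, hc]
    field_simp
    ring
  have hB21 : V * -(AuM u) + (Matrix.of fun (_ : Unit) (_ : Unit) => (1 : ℍ)) * V = 0 := by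
    rw [hW, Matrix.one_mul, hA]
    simp only [Matrix.mul_neg, Matrix.mul_add, Matrix.mul_smul, Matrix.mul_one, hVP]
    match_scalars
    rw [htt, hc]
    field_simp
    ring
  have hB22 : V * U + (Matrix.of fun (_ : Unit) (_ : Unit) => (1 : ℍ)) *
      (Matrix.of fun (_ : Unit) (_ : Unit) => (1 : ℍ)) = (s ^ 2) • (1 : Matrix Unit Unit ℍ) := by
    rw [hW, Matrix.mul_one, hVU]
    match_scalars
    linarith
  unfold PhiM
  rw [← hs, ← hU, ← hV, Matrix.smul_mul, Matrix.mul_smul, smul_smul,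
    Matrix.fromBlocks_multiply, hB11, hB12, hB21, hB22, Matrix.fromBlocks_smul,
    smul_smul, smul_smul, smul_zero, smul_zero]
  have hcoef : s⁻¹ * s⁻¹ * s ^ 2 = 1 := by
    field_simp
  rw [hcoef, one_smul, one_smul, Matrix.fromBlocks_one]
end
end

section
/- For u, z ∈ ℍⁿ with |u| < 1 and |z| ≤ 1, the quaternionic Hua map Φ_u(z) = (u − A_u z)(1 − ⟨z,u⟩)⁻¹ satisfies the norm identity |Φ_u(z)|² = 1 − (1−|u|²)(1−|z|²)/|1 − ⟨z,u⟩|², where ⟨z,u⟩ = u* z. In particular this requires verifying |u − A_u z|² = |1 − ⟨z,u⟩|² − (1−|u|²)(1−|z|²). -/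
/-!
Writing `s = √(1 - |u|²)` and `c = 1 - ⟨z,u⟩ / (1 + s)`, the numerator is `u - A_u z = u c - s z`.
Expanding its squared norm gives `|c|²|u|² + s²|z|² - 2s Re(⟨u,z⟩ c)`, a polynomial in `Re ⟨z,u⟩`
and `|⟨z,u⟩|²` which collapses to `|1 - ⟨z,u⟩|² - (1 - |u|²)(1 - |z|²)` once `s² = 1 - |u|²` and
`(1 - s²)/(1 + s) = 1 - s` are used. Right multiplication by `(1 - ⟨z,u⟩)⁻¹` scales every coordinate
norm by `|1 - ⟨z,u⟩|⁻¹`, and `1 - ⟨z,u⟩ ≠ 0` because `|⟨z,u⟩| ≤ |z||u| < 1` by Cauchy–Schwarz.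
-/

noncomputable section

/-- Hermitian inner product ⟨z,w⟩ = w* z = ∑ conj(wᵢ) zᵢ on the right ℍ-module ℍⁿ. -/
def qinner {n : ℕ} (z w : Fin n → ℍ) : ℍ := ∑ i, star (w i) * z i

/-- Squared norm |u|² = ∑ |uᵢ|². -/
def qnormSq {n : ℕ} (u : Fin n → ℍ) : ℝ := ∑ i, ‖u i‖ ^ 2

/-- Norm |u|. -/
def qnorm {n : ℕ} (u : Fin n → ℍ) : ℝ := Real.sqrt (qnormSq u)

/-- The Hua operator A_u = (1/(1+s))·u u* + s·I, with s = √(1−|u|²). -/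
def Au {n : ℕ} (u : Fin n → ℍ) (x : Fin n → ℍ) : Fin n → ℍ :=
  fun i => ((1 + Real.sqrt (1 - qnormSq u))⁻¹) • (u i * qinner x u)
    + (Real.sqrt (1 - qnormSq u)) • x i

/-- The quaternionic Hua map Φ_u(z) = (u − A_u z)(1 − ⟨z,u⟩)⁻¹. -/
def Phiu {n : ℕ} (u : Fin n → ℍ) (z : Fin n → ℍ) : Fin n → ℍ :=
  fun i => (u i - Au u z i) * (1 - qinner z u)⁻¹

namespace Quaternion

lemma re_mul_comm (p q : ℍ) : (p * q).re = (q * p).re := by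
  simp only [re_mul]; ring

lemma re_sum {ι : Type*} (s : Finset ι) (f : ι → ℍ) :
    (∑ i ∈ s, f i).re = ∑ i ∈ s, (f i).re :=
  map_sum (QuaternionAlgebra.reₗ _ _ _) f s

lemma sq_norm (q : ℍ) : ‖q‖ ^ 2 = normSq q := by
  rw [sq, normSq_eq_norm_mul_self]

end Quaternion

section QuaternionicHilbertSpace

variable {n : ℕ}

lemma qnormSq_lt_one_of_qnorm_lt_one {x : Fin n → ℍ} (h : qnorm x < 1) : qnormSq x < 1 := by
  simpa using (Real.sqrt_lt' one_pos).mp h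

lemma star_qinner (x y : Fin n → ℍ) : star (qinner x y) = qinner y x := by
  simp only [qinner, star_sum, star_mul, star_star]

lemma norm_qinner_le (x y : Fin n → ℍ) : ‖qinner x y‖ ≤ qnorm x * qnorm y :=
  calc ‖qinner x y‖ ≤ ∑ i, ‖x i‖ * ‖y i‖ :=
        (norm_sum_le _ _).trans_eq <| Finset.sum_congr rfl fun i _ => by
          rw [norm_mul, norm_star, mul_comm]
    _ ≤ qnorm x * qnorm y := Real.sum_mul_le_sqrt_mul_sqrt _ _ _

lemma norm_one_sub_qinner_pos {x y : Fin n → ℍ} (hx : qnorm x ≤ 1) (hy : qnorm y < 1) :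
    0 < ‖1 - qinner x y‖ := by
  have hxy : ‖qinner x y‖ < 1 :=
    (norm_qinner_le x y).trans_lt <|
      (mul_le_of_le_one_left (Real.sqrt_nonneg _) hx).trans_lt hy
  calc 0 < 1 - ‖qinner x y‖ := sub_pos.mpr hxy
    _ ≤ ‖1 - qinner x y‖ := by simpa using norm_sub_norm_le (1 : ℍ) (qinner x y)

lemma qnormSq_sub (x y : Fin n → ℍ) :
    qnormSq (fun i => x i - y i) = qnormSq x - 2 * (qinner x y).re + qnormSq y := by
  simp only [qnormSq, qinner, Quaternion.re_sum, norm_sub_sq_real, Quaternion.inner_def,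
    Finset.sum_add_distrib, Finset.sum_sub_distrib, Finset.mul_sum]
  simp only [Quaternion.re_mul_comm (star (y _))]

lemma qnormSq_mul_right (x : Fin n → ℍ) (q : ℍ) :
    qnormSq (fun i => x i * q) = qnormSq x * ‖q‖ ^ 2 := by
  simp only [qnormSq, norm_mul, mul_pow, Finset.sum_mul]

lemma qnormSq_smul (r : ℝ) (x : Fin n → ℍ) : qnormSq (fun i => r • x i) = r ^ 2 * qnormSq x := by
  simp only [qnormSq, norm_smul, mul_pow, Real.norm_eq_abs, sq_abs, Finset.mul_sum]

lemma qinner_mul_right_smul (x y : Fin n → ℍ) (q : ℍ) (r : ℝ) :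
    qinner (fun i => x i * q) (fun i => r • y i) = r • (qinner x y * q) := by
  simp only [qinner, Finset.sum_mul, Finset.smul_sum, Quaternion.star_smul, smul_mul_assoc,
    mul_assoc]

end QuaternionicHilbertSpace

section Hua

variable {n : ℕ}

lemma sub_Au_apply (u z : Fin n → ℍ) (i : Fin n) :
    u i - Au u z i
      = u i * (1 - (1 + √(1 - qnormSq u))⁻¹ • qinner z u) - √(1 - qnormSq u) • z i := by
  simp only [Au, mul_sub, mul_one, mul_smul_comm, sub_add_eq_sub_sub]

lemma qnormSq_sub_Au (u z : Fin n → ℍ) (hu : qnormSq u ≤ 1) :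
    qnormSq (fun i => u i - Au u z i)
      = ‖1 - qinner z u‖ ^ 2 - (1 - qnormSq u) * (1 - qnormSq z) := by
  simp only [sub_Au_apply, qnormSq_sub, qnormSq_mul_right, qnormSq_smul, qinner_mul_right_smul,
    Quaternion.re_smul, smul_eq_mul]
  rw [← star_qinner z u]
  set s := √(1 - qnormSq u)
  set t := (1 + s)⁻¹
  set a := qinner z u
  have hs : s ^ 2 = 1 - qnormSq u := Real.sq_sqrt (sub_nonneg.mpr hu)
  have ht : t * (1 + s) = 1 := inv_mul_cancel₀ (by positivity)
  have hc : ‖1 - t • a‖ ^ 2 = 1 - 2 * t * a.re + t ^ 2 * ‖a‖ ^ 2 := by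
    rw [norm_sub_sq_real, real_inner_smul_right, Quaternion.inner_def, norm_smul, mul_pow,
      Real.norm_eq_abs, sq_abs, norm_one, one_mul, Quaternion.re_star]
    ring
  have hca : (star a * (1 - t • a)).re = a.re - t * ‖a‖ ^ 2 := by
    rw [mul_sub, mul_one, mul_smul_comm, Quaternion.star_mul_self, Quaternion.re_sub,
      Quaternion.re_smul, Quaternion.re_star, Quaternion.re_coe, Quaternion.sq_norm, smul_eq_mul]
  have h1a : ‖1 - a‖ ^ 2 = 1 - 2 * a.re + ‖a‖ ^ 2 := by
    rw [norm_sub_sq_real, Quaternion.inner_def, one_mul, Quaternion.re_star, norm_one]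
    ring
  rw [hc, hca, h1a]
  linear_combination (t ^ 2 * ‖a‖ ^ 2 - 2 * t * a.re + qnormSq z) * hs
    + ((1 - s) * (t * ‖a‖ ^ 2 - 2 * a.re) + ‖a‖ ^ 2) * ht

lemma qnormSq_Phiu (u z : Fin n → ℍ) :
    qnormSq (Phiu u z) = qnormSq (fun i => u i - Au u z i) / ‖1 - qinner z u‖ ^ 2 := by
  rw [div_eq_mul_inv, ← inv_pow, ← norm_inv]
  exact qnormSq_mul_right _ _

end Hua

theorem Phiu_norm_identity {n : ℕ} (u z : Fin n → ℍ)
    (hu : qnorm u < 1) (hz : qnorm z ≤ 1) :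
    qnormSq (fun i => u i - Au u z i)
      = ‖1 - qinner z u‖ ^ 2 - (1 - qnormSq u) * (1 - qnormSq z) ∧
    qnormSq (Phiu u z)
      = 1 - (1 - qnormSq u) * (1 - qnormSq z) / ‖1 - qinner z u‖ ^ 2 := by
  have numerator := qnormSq_sub_Au u z (qnormSq_lt_one_of_qnorm_lt_one hu).le
  have hpos := norm_one_sub_qinner_pos hz hu
  refine ⟨numerator, ?_⟩
  rw [qnormSq_Phiu, numerator]
  field_simp
end
end

section
/- Let a, r be real numbers with a² ≤ r² < 1 and a ≥ 0. Define N(u) = (1+r²−2a²) − 2a(1−r²)u + (2a²−r⁴−r²)u². Then N(u) > 0 for all u ∈ [−1, 1]. -/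
theorem N_pos (a r u : ℝ) (har : a ^ 2 ≤ r ^ 2) (hr : r ^ 2 < 1) (ha : 0 ≤ a)
    (hu : u ∈ Set.Icc (-1 : ℝ) 1) :
    0 < (1 + r ^ 2 - 2 * a ^ 2) - 2 * a * (1 - r ^ 2) * u
        + (2 * a ^ 2 - r ^ 4 - r ^ 2) * u ^ 2 := by
  obtain ⟨h1, h2⟩ := hu
  have ha1 : a < 1 := by nlinarith
  have h1r : (0:ℝ) < 1 - r ^ 2 := by linarith
  have hN1 : 0 < (1 - r ^ 2) * (1 + r ^ 2 - 2 * a) := by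
    have : (0:ℝ) < 1 + r ^ 2 - 2 * a := by nlinarith [sq_nonneg (1 - a)]
    positivity
  have hNm1 : 0 < (1 - r ^ 2) * (1 + r ^ 2 + 2 * a) := by
    have : (0:ℝ) < 1 + r ^ 2 + 2 * a := by positivity
    positivity
  rcases le_or_gt (2 * a ^ 2 - r ^ 4 - r ^ 2) 0 with hc | hc
  · nlinarith [mul_nonneg (by linarith : (0:ℝ) ≤ 1 + u) hN1.le,
      mul_nonneg (by linarith : (0:ℝ) ≤ 1 - u) hNm1.le,
      mul_nonneg (by linarith : (0:ℝ) ≤ -(2 * a ^ 2 - r ^ 4 - r ^ 2))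
        (by nlinarith : (0:ℝ) ≤ 1 - u ^ 2)]
  · have hg : 0 ≤ a * (1 - r ^ 2) + r ^ 4 + r ^ 2 - 2 * a ^ 2 := by
      nlinarith [mul_nonneg ha (sq_nonneg (1 - a)), mul_nonneg ha (sub_nonneg.2 har),
        sq_nonneg (r ^ 2 - a), mul_nonneg (sub_nonneg.2 har) (sub_nonneg.2 hr.le)]
    nlinarith [mul_nonneg (by linarith : (0:ℝ) ≤ 1 - u)
        (by nlinarith : (0:ℝ) ≤ 2 * a * (1 - r ^ 2) - (2 * a ^ 2 - r ^ 4 - r ^ 2) * (1 + u))]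
end
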